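/- The group GL₂(R), for R a finite local ring, acts transitively on ordered triples of pairwise non-parallel points of the projective line P(R). -/

import Mathlib

section ProjectiveLine

variable (R : Type*) [Ring R]

/-- `(a,b)` is an admissible representative: it is the first row of an invertible
`2×2` matrix over `R`. -/
def IsRep (p : R × R) : Prop :=
  ∃ c d : R, IsUnit (!![p.1, p.2; c, d] : Matrix (Fin 2) (Fin 2) R)

/-- The projective line over `R`: the cyclic submodules `R(a,b)` of `R²` with `(a,b)`
the first row of an invertible matrix. -/
def ProjLine : Set (Submodule R (R × R)) :=
  {P | ∃ p : R × R, IsRep R p ∧ P = Submodule.span R {p}}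

/-- Parallelism: `R(a,b) ∥ R(c,d)` iff the matrix with rows `(a,b)`, `(c,d)` is not
invertible. -/
def Par (P Q : Submodule R (R × R)) : Prop :=
  ∃ p q : R × R, IsRep R p ∧ IsRep R q ∧
    P = Submodule.span R {p} ∧ Q = Submodule.span R {q} ∧
    ¬ IsUnit (!![p.1, p.2; q.1, q.2] : Matrix (Fin 2) (Fin 2) R)

end ProjectiveLine

section Action

variable {R : Type*} [Ring R]

/-- The (left-)linear map `R² → R²` given by right multiplication of row vectors with
the matrix `g`. -/
def actMap (g : Matrix (Fin 2) (Fin 2) R) : (R × R) →ₗ[R] (R × R) where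
  toFun p := (p.1 * g 0 0 + p.2 * g 1 0, p.1 * g 0 1 + p.2 * g 1 1)
  map_add' p q := by
    simp only [Prod.fst_add, Prod.snd_add, add_mul, Prod.mk_add_mk]
    refine Prod.ext ?_ ?_ <;> dsimp <;> abel
  map_smul' r p := by
    simp only [Prod.smul_fst, Prod.smul_snd, smul_eq_mul, RingHom.id_apply, Prod.smul_mk,
      mul_add, mul_assoc]

end Action

/-!
Every triple of pairwise non-parallel points `Rp, Rq, Rr` is the image of the standard triple
`R(1,0), R(0,1), R(1,1)`. With `M` the invertible matrix with rows `p, q`, write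
`r = αp + βq`; multiplying the invertible matrices with rows `(p, r)` and `(q, r)` by `M⁻¹`
gives the rows `(1,0), (α,β)` and `(0,1), (α,β)`, so `β` and `α` are units. The matrix with
rows `αp, βq` is then invertible and maps the standard triple to `(Rp, Rq, Rr)`.
Transitivity follows by composing the inverse of one such matrix with another.
-/

section Transitivity

variable {R : Type*} [Ring R]

def rowMatrix (p q : R × R) : Matrix (Fin 2) (Fin 2) R :=
  !![p.1, p.2; q.1, q.2]

lemma actMap_mul (A B : Matrix (Fin 2) (Fin 2) R) :
    actMap (A * B) = (actMap B).comp (actMap A) := by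
  refine LinearMap.ext fun x => Prod.ext ?_ ?_ <;>
  · simp only [actMap, LinearMap.comp_apply, LinearMap.coe_mk, AddHom.coe_mk,
      Matrix.mul_apply, Fin.sum_univ_two]
    noncomm_ring

lemma actMap_one : actMap (1 : Matrix (Fin 2) (Fin 2) R) = LinearMap.id :=
  LinearMap.ext fun x => by simp [actMap]

lemma actMap_inv_actMap (g : (Matrix (Fin 2) (Fin 2) R)ˣ) (x : R × R) :
    actMap g⁻¹.val (actMap g.val x) = x := by
  rw [← LinearMap.comp_apply, ← actMap_mul, g.mul_inv, actMap_one, LinearMap.id_apply]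

lemma actMap_actMap_inv (g : (Matrix (Fin 2) (Fin 2) R)ˣ) (x : R × R) :
    actMap g.val (actMap g⁻¹.val x) = x :=
  actMap_inv_actMap g⁻¹ x

lemma rowMatrix_mul (p q : R × R) (N : Matrix (Fin 2) (Fin 2) R) :
    rowMatrix p q * N = rowMatrix (actMap N p) (actMap N q) := by
  ext i j
  fin_cases i <;> fin_cases j <;> simp [rowMatrix, actMap, Matrix.mul_apply]

@[simp]
lemma actMap_rowMatrix_one_zero (p q : R × R) : actMap (rowMatrix p q) (1, 0) = p := by
  simp [actMap, rowMatrix]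

@[simp]
lemma actMap_rowMatrix_zero_one (p q : R × R) : actMap (rowMatrix p q) (0, 1) = q := by
  simp [actMap, rowMatrix]

lemma isUnit_of_isUnit_rowMatrix_one_zero {a b : R} (h : IsUnit (rowMatrix (1, 0) (a, b))) :
    IsUnit b := by
  obtain ⟨u, hu⟩ := h
  have h₁ := Matrix.ext_iff.2 (hu ▸ u.mul_inv)
  have h₂ := Matrix.ext_iff.2 (hu ▸ u.inv_mul)
  simp only [rowMatrix, Matrix.mul_apply, Fin.sum_univ_two, Matrix.one_apply] at h₁ h₂
  have h₀₁ : u⁻¹.val 0 1 = 0 := by simpa using h₁ 0 1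
  refine isUnit_iff_exists.2 ⟨u⁻¹.val 1 1, ?_, ?_⟩
  · simpa [h₀₁] using h₁ 1 1
  · simpa [h₀₁] using h₂ 1 1

lemma isUnit_of_isUnit_rowMatrix_zero_one {a b : R} (h : IsUnit (rowMatrix (0, 1) (a, b))) :
    IsUnit a := by
  have swap_sq : rowMatrix ((0 : R), (1 : R)) (1, 0) * rowMatrix (0, 1) (1, 0) = 1 := by
    rw [rowMatrix_mul]; simp [rowMatrix, actMap, Matrix.one_fin_two]
  have swap : IsUnit (rowMatrix ((0 : R), (1 : R)) (1, 0)) := ⟨⟨_, _, swap_sq, swap_sq⟩, rfl⟩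
  apply isUnit_of_isUnit_rowMatrix_one_zero (a := b)
  convert h.mul swap using 1
  rw [rowMatrix_mul]
  simp [rowMatrix, actMap]

lemma exists_actMap_standard_triple {p q r : R × R} (hpq : IsUnit (rowMatrix p q))
    (hpr : IsUnit (rowMatrix p r)) (hqr : IsUnit (rowMatrix q r)) :
    ∃ (g : (Matrix (Fin 2) (Fin 2) R)ˣ) (α β : R), IsUnit α ∧ IsUnit β ∧
      actMap g.val (1, 0) = α • p ∧ actMap g.val (0, 1) = β • q ∧ actMap g.val (1, 1) = r := by
  obtain ⟨M, hM⟩ := hpq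
  set c := actMap M⁻¹.val r with hc
  have hp : actMap M⁻¹.val p = (1, 0) := by
    rw [← actMap_rowMatrix_one_zero p q, ← hM, actMap_inv_actMap]
  have hq : actMap M⁻¹.val q = (0, 1) := by
    rw [← actMap_rowMatrix_zero_one p q, ← hM, actMap_inv_actMap]
  have hβ : IsUnit c.2 := isUnit_of_isUnit_rowMatrix_one_zero (a := c.1) <| by
    simpa only [rowMatrix_mul, hp] using hpr.mul M⁻¹.isUnit
  have hα : IsUnit c.1 := isUnit_of_isUnit_rowMatrix_zero_one (b := c.2) <| by
    simpa only [rowMatrix_mul, hq] using hqr.mul M⁻¹.isUnit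
  have hD : IsUnit (Matrix.diagonal ![c.1, c.2]) :=
    (Pi.isUnit_iff.2 (Fin.forall_fin_two.2 ⟨hα, hβ⟩)).map (Matrix.diagonalRingHom (Fin 2) R)
  obtain ⟨D, hD⟩ := hD
  have actMap_D (x : R × R) : actMap D.val x = (x.1 * c.1, x.2 * c.2) := by
    simp [hD, actMap, Matrix.diagonal]
  refine ⟨D * M, c.1, c.2, hα, hβ, ?_, ?_, ?_⟩ <;>
    simp only [Units.val_mul, actMap_mul, LinearMap.comp_apply, actMap_D]
  · simpa [hM] using (actMap M.val).map_smul c.1 (1, 0)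
  · simpa [hM] using (actMap M.val).map_smul c.2 (0, 1)
  · simp [hc, actMap_actMap_inv]

lemma map_actMap_span_singleton (g : Matrix (Fin 2) (Fin 2) R) (x : R × R) :
    Submodule.map (actMap g) (Submodule.span R {x}) = Submodule.span R {actMap g x} := by
  rw [Submodule.map_span, Set.image_singleton]

lemma isUnit_rowMatrix_of_not_par {p q : R × R} (hp : IsRep R p) (hq : IsRep R q)
    (h : ¬ Par R (Submodule.span R {p}) (Submodule.span R {q})) : IsUnit (rowMatrix p q) :=
  not_not.1 fun hpq => h ⟨p, q, hp, hq, rfl, rfl, hpq⟩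

lemma exists_map_standard_triple {P₁ P₂ P₃ : Submodule R (R × R)}
    (h₁ : P₁ ∈ ProjLine R) (h₂ : P₂ ∈ ProjLine R) (h₃ : P₃ ∈ ProjLine R)
    (h₁₂ : ¬ Par R P₁ P₂) (h₁₃ : ¬ Par R P₁ P₃) (h₂₃ : ¬ Par R P₂ P₃) :
    ∃ g : (Matrix (Fin 2) (Fin 2) R)ˣ,
      Submodule.map (actMap g.val) (Submodule.span R {(1, 0)}) = P₁ ∧
      Submodule.map (actMap g.val) (Submodule.span R {(0, 1)}) = P₂ ∧
      Submodule.map (actMap g.val) (Submodule.span R {(1, 1)}) = P₃ := by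
  obtain ⟨p, hp, rfl⟩ := h₁
  obtain ⟨q, hq, rfl⟩ := h₂
  obtain ⟨r, hr, rfl⟩ := h₃
  obtain ⟨g, α, β, hα, hβ, hgp, hgq, hgr⟩ := exists_actMap_standard_triple
    (isUnit_rowMatrix_of_not_par hp hq h₁₂) (isUnit_rowMatrix_of_not_par hp hr h₁₃)
    (isUnit_rowMatrix_of_not_par hq hr h₂₃)
  refine ⟨g, ?_, ?_, ?_⟩ <;> rw [map_actMap_span_singleton]
  · rw [hgp, Submodule.span_singleton_smul_eq hα]
  · rw [hgq, Submodule.span_singleton_smul_eq hβ]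
  · rw [hgr]

lemma map_actMap_inv_mul {g h : (Matrix (Fin 2) (Fin 2) R)ˣ} {S P Q : Submodule R (R × R)}
    (hg : Submodule.map (actMap g.val) S = P) (hh : Submodule.map (actMap h.val) S = Q) :
    Submodule.map (actMap (g⁻¹ * h).val) P = Q := by
  rw [← hg, ← hh, Units.val_mul, actMap_mul, Submodule.map_comp,
    ← Submodule.map_comp (actMap g.val), ← actMap_mul, g.mul_inv, actMap_one, Submodule.map_id]

end Transitivity

theorem gl2_transitive_on_triples_general {R : Type*} [Ring R]
    (P₁ P₂ P₃ Q₁ Q₂ Q₃ : Submodule R (R × R))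
    (hP₁ : P₁ ∈ ProjLine R) (hP₂ : P₂ ∈ ProjLine R) (hP₃ : P₃ ∈ ProjLine R)
    (hQ₁ : Q₁ ∈ ProjLine R) (hQ₂ : Q₂ ∈ ProjLine R) (hQ₃ : Q₃ ∈ ProjLine R)
    (hP12 : ¬ Par R P₁ P₂) (hP13 : ¬ Par R P₁ P₃) (hP23 : ¬ Par R P₂ P₃)
    (hQ12 : ¬ Par R Q₁ Q₂) (hQ13 : ¬ Par R Q₁ Q₃) (hQ23 : ¬ Par R Q₂ Q₃) :
    ∃ g : (Matrix (Fin 2) (Fin 2) R)ˣ,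
      Submodule.map (actMap g.val) P₁ = Q₁ ∧
      Submodule.map (actMap g.val) P₂ = Q₂ ∧
      Submodule.map (actMap g.val) P₃ = Q₃ := by
  obtain ⟨g, hg₁, hg₂, hg₃⟩ := exists_map_standard_triple hP₁ hP₂ hP₃ hP12 hP13 hP23
  obtain ⟨h, hh₁, hh₂, hh₃⟩ := exists_map_standard_triple hQ₁ hQ₂ hQ₃ hQ12 hQ13 hQ23
  exact ⟨g⁻¹ * h, map_actMap_inv_mul hg₁ hh₁, map_actMap_inv_mul hg₂ hh₂,
    map_actMap_inv_mul hg₃ hh₃⟩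

/-- The group `GL₂(R)`, for `R` a finite local ring, acts transitively
on ordered triples of pairwise non-parallel points of the projective line `P(R)`. -/
theorem gl2_transitive_on_triples {R : Type*} [Ring R] [IsLocalRing R] [Finite R]
    (P₁ P₂ P₃ Q₁ Q₂ Q₃ : Submodule R (R × R))
    (hP₁ : P₁ ∈ ProjLine R) (hP₂ : P₂ ∈ ProjLine R) (hP₃ : P₃ ∈ ProjLine R)
    (hQ₁ : Q₁ ∈ ProjLine R) (hQ₂ : Q₂ ∈ ProjLine R) (hQ₃ : Q₃ ∈ ProjLine R)
    (hP12 : ¬ Par R P₁ P₂) (hP13 : ¬ Par R P₁ P₃) (hP23 : ¬ Par R P₂ P₃)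
    (hQ12 : ¬ Par R Q₁ Q₂) (hQ13 : ¬ Par R Q₁ Q₃) (hQ23 : ¬ Par R Q₂ Q₃) :
    ∃ g : (Matrix (Fin 2) (Fin 2) R)ˣ,
      Submodule.map (actMap g.val) P₁ = Q₁ ∧
      Submodule.map (actMap g.val) P₂ = Q₂ ∧
      Submodule.map (actMap g.val) P₃ = Q₃ :=
  gl2_transitive_on_triples_general P₁ P₂ P₃ Q₁ Q₂ Q₃ hP₁ hP₂ hP₃ hQ₁ hQ₂ hQ₃ hP12 hP13 hP23 hQ12
    hQ13 hQ23
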